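/- arXiv:2308.16324 — 3 statements merged into one kernel-verified Lean document; each statement's English description precedes it below -/
import Mathlib

section
/- Let T_m = m(m+1)/2 denote the m-th triangular number. Suppose m ≥ 2 and N is an integer with T_{m-1} < N+1 ≤ T_m. Define E_k = (N+1)/(k+1) + (k+1)/2. Then E_{m-1} < E_{m-2}; that is, using K = m−1 initial choices gives strictly smaller expected total rank than K = m−2. -/
theorem better_integer_choice (m : ℕ) (N : ℤ) (hm : 2 ≤ m)
    (h1 : ((m - 1 : ℕ) * m : ℝ) / 2 < (N : ℝ) + 1)
    (h2 : ((N : ℝ) + 1) ≤ (m * (m + 1) : ℝ) / 2) :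
    ((N : ℝ) + 1) / (((m - 1 : ℕ) : ℝ) + 1) + (((m - 1 : ℕ) : ℝ) + 1) / 2 <
      ((N : ℝ) + 1) / (((m - 2 : ℕ) : ℝ) + 1) + (((m - 2 : ℕ) : ℝ) + 1) / 2 := by
  obtain ⟨k, rfl⟩ : ∃ k, m = k + 2 := ⟨m - 2, by omega⟩
  have e1 : (k + 2 - 1 : ℕ) = k + 1 := by omega
  have e2 : (k + 2 - 2 : ℕ) = k := by omega
  rw [e1, e2] at *
  set K : ℝ := (k : ℝ) with hK
  have hK0 : (0:ℝ) ≤ K := Nat.cast_nonneg k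
  push_cast at h1 ⊢
  set x : ℝ := (N : ℝ) + 1
  have h1' : (K + 1) * (K + 2) / 2 < x := by nlinarith
  have p1 : (0:ℝ) < K + 1 := by linarith
  have p2 : (0:ℝ) < K + 2 := by linarith
  have e3 : ((k:ℝ) + 1 + 1) = K + 2 := by ring
  rw [e3, div_add_div _ _ (ne_of_gt p2) two_ne_zero, div_add_div _ _ (ne_of_gt p1) two_ne_zero,
    div_lt_div_iff₀ (by positivity) (by positivity)]
  ring_nf
  ring_nf at h1'
  linarith
end

section
/- Let T_m = m(m+1)/2. Suppose m ≥ 1 and N is an integer with T_{m-1} < N+1 ≤ T_m. Setting K = m−1, we have |E(T) − E(D)| ≤ 1/2, where E(T) = (N+1)/m and E(D) = m/2. -/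
theorem fairness_bound (m : ℕ) (N : ℤ) (hm : 1 ≤ m)
    (h1 : ((m - 1 : ℕ) * m : ℝ) / 2 < (N : ℝ) + 1)
    (h2 : ((N : ℝ) + 1) ≤ (m * (m + 1) : ℝ) / 2) :
    |((N : ℝ) + 1) / (m : ℝ) - (m : ℝ) / 2| ≤ 1 / 2 := by
  have hm' : (1:ℝ) ≤ (m:ℝ) := by exact_mod_cast hm
  have hmpos : (0:ℝ) < (m:ℝ) := by linarith
  have hcast : ((m - 1 : ℕ) : ℝ) = (m:ℝ) - 1 := by
    push_cast [Nat.cast_sub hm]; ring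
  rw [hcast] at h1
  have h3 : ((N : ℝ) + 1) / (m : ℝ) ≤ ((m:ℝ) + 1) / 2 := by
    rw [div_le_div_iff₀ hmpos two_pos]; nlinarith
  have h4 : ((m:ℝ) - 1) / 2 < ((N : ℝ) + 1) / (m : ℝ) := by
    rw [div_lt_div_iff₀ two_pos hmpos]; nlinarith
  rw [abs_le]
  constructor <;> linarith
end

section
/- For 1 ≤ K ≤ N, the sum over d from 1 to N-K+1 of d²·C(N-d,K-1)/C(N,K) equals (N+1)(2N−K+2)/((K+1)(K+2)). -/
open Finset

lemma hockey (j : ℕ) : ∀ n, ∑ d ∈ range (n+1), d.choose j = (n+1).choose (j+1) := by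
  intro n
  induction n with
  | zero => cases j <;> simp [Nat.choose]
  | succ n ih =>
      rw [Finset.sum_range_succ, ih, Nat.add_comm, ← Nat.choose_succ_succ' (n+1) j]

lemma vdm (j : ℕ) : ∀ m n, ∑ d ∈ range (n+1), d.choose j * (n-d).choose m
    = (n+1).choose (j+m+1) := by
  intro m
  induction m with
  | zero => intro n; simpa using hockey j n
  | succ m ihm =>
      intro n
      induction n with
      | zero =>
          simp [Nat.choose_eq_zero_of_lt (show 1 < j+(m+1)+1 by omega)]
      | succ n ihn =>
          rw [Finset.sum_range_succ]
          have h1 : ∀ d ∈ range (n+1), d.choose j * (n+1-d).choose (m+1)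
              = d.choose j * (n-d).choose m + d.choose j * (n-d).choose (m+1) := by
            intro d hd
            have hdn : d ≤ n := by simpa using Nat.lt_succ_iff.mp (mem_range.mp hd)
            rw [show n+1-d = (n-d)+1 by omega, Nat.choose_succ_succ, Nat.mul_add]
          rw [Finset.sum_congr rfl h1, Finset.sum_add_distrib, ihm n, ihn,
            show j+(m+1)+1 = (j+m+1)+1 from by omega, ← Nat.choose_succ_succ' (n+1) (j+m+1)]
          simp

lemma sq_choose (d : ℕ) : d^2 = 2 * d.choose 2 + d.choose 1 := by
  induction d with
  | zero => simp
  | succ d ih =>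
      have h1 : (d+1).choose 2 = d.choose 1 + d.choose 2 := Nat.choose_succ_succ d 1
      have h2 : d.choose 1 = d := Nat.choose_one_right d
      have h3 : (d+1).choose 1 = d+1 := Nat.choose_one_right (d+1)
      rw [h1, h2, h3]
      rw [h2] at ih
      nlinarith [ih]

lemma main_nat (N K : ℕ) (hK : 1 ≤ K) (hKN : K ≤ N) :
    ∑ d ∈ Icc 1 (N-K+1), d^2 * (N-d).choose (K-1)
      = 2 * (N+1).choose (K+2) + (N+1).choose (K+1) := by
  have hsub : Icc 1 (N-K+1) ⊆ range (N+1) := by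
    intro d hd
    simp only [mem_Icc] at hd
    simp only [mem_range]
    omega
  rw [Finset.sum_subset hsub ?_]
  · have : ∀ d ∈ range (N+1), d^2 * (N-d).choose (K-1)
        = 2 * (d.choose 2 * (N-d).choose (K-1)) + d.choose 1 * (N-d).choose (K-1) := by
      intro d _
      rw [sq_choose d]; ring
    rw [Finset.sum_congr rfl this, Finset.sum_add_distrib, ← Finset.mul_sum,
      vdm 2 (K-1) N, vdm 1 (K-1) N, show 2+(K-1)+1 = K+2 from by omega,
      show 1+(K-1)+1 = K+1 from by omega]
  · intro d hd hnd
    simp only [mem_range] at hd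
    simp only [mem_Icc, not_and_or, not_le] at hnd
    rcases hnd with h | h
    · interval_cases d <;> simp
    · have : (N - d).choose (K-1) = 0 := Nat.choose_eq_zero_of_lt (by omega)
      simp [this]

theorem expected_T_squared (N K : ℕ) (hK : 1 ≤ K) (hKN : K ≤ N) :
    ∑ d ∈ Finset.Icc 1 (N - K + 1),
        (d : ℝ) ^ 2 * ((N - d).choose (K - 1) : ℝ) / (N.choose K : ℝ) =
      ((N : ℝ) + 1) * (2 * N - K + 2) / (((K : ℝ) + 1) * ((K : ℝ) + 2)) := by
  have hA : (0:ℝ) < (N.choose K : ℝ) := by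
    exact_mod_cast Nat.choose_pos hKN
  have hL : ∑ d ∈ Finset.Icc 1 (N - K + 1),
        (d : ℝ) ^ 2 * ((N - d).choose (K - 1) : ℝ) / (N.choose K : ℝ)
      = ((2 * (N+1).choose (K+2) + (N+1).choose (K+1) : ℕ) : ℝ) / (N.choose K : ℝ) := by
    rw [← main_nat N K hK hKN]
    rw [← Finset.sum_div]
    congr 1
    push_cast
    rfl
  rw [hL]
  push_cast
  have f1 : ((N:ℝ)+1) * (N.choose K : ℝ) = ((N+1).choose (K+1) : ℝ) * ((K:ℝ)+1) := by
    have := Nat.add_one_mul_choose_eq N K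
    exact_mod_cast this
  have f2 : ((N+1).choose (K+2) : ℝ) * ((K:ℝ)+2) = ((N+1).choose (K+1) : ℝ) * ((N:ℝ) - K) := by
    have h := Nat.choose_succ_right_eq (N+1) (K+1)
    have h2 : N + 1 - (K+1) = N - K := by omega
    rw [h2] at h
    have := congrArg (fun x : ℕ => (x : ℝ)) h
    push_cast [Nat.cast_sub hKN] at this
    convert this using 2 <;> push_cast <;> ring
  field_simp
  nlinarith [f1, f2, hA]
end
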